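/- arXiv:2301.12837 — 2 statements merged into one kernel-verified Lean document; each statement's English description precedes it below -/
import Mathlib

section
/- Let A be an m×m complex matrix and B an n×n complex matrix. The linear map φ : M_{m,n}(ℂ) → M_{m,n}(ℂ) defined by φ(X) = AX − XB is a linear isomorphism if and only if the spectra of A and B are disjoint (i.e., A and B share no common eigenvalue). -/
/-!
If `μ` is a common eigenvalue, with `A v = μ v` and `wᵀ B = μ wᵀ`, the rank-one matrix `v wᵀ` is a
nonzero solution of `A X = X B`. Conversely, `A X = X B` gives `p(A) X = X p(B)` for every
polynomial `p`. For `p = χ_B` the right-hand side vanishes by Cayley–Hamilton, while by spectral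
mapping `σ(χ_B(A)) = χ_B(σ(A))`, which misses `0` when the spectra are disjoint; so `χ_B(A)` is
invertible and `X = 0`. On the finite-dimensional space of matrices, injectivity gives bijectivity.
-/

open Polynomial

theorem isUnit_aeval_of_forall_eval_ne_zero {K A : Type*} [Field K] [IsAlgClosed K] [Ring A]
    [Algebra K A] [FiniteDimensional K A] {a : A} {p : K[X]}
    (h : ∀ k ∈ spectrum K a, p.eval k ≠ 0) : IsUnit (aeval a p) := by
  nontriviality A
  by_contra hp
  rw [← spectrum.zero_mem_iff K, spectrum.map_polynomial_aeval_of_nonempty a p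
    (spectrum.nonempty_of_isAlgClosed_of_finiteDimensional K a)] at hp
  obtain ⟨k, hk, hk0⟩ := hp
  exact h k hk hk0

namespace Matrix

variable {m n : Type*} [Fintype m] [Fintype n]

def sylvesterMap {R : Type*} [CommRing R] (A : Matrix m m R) (B : Matrix n n R) :
    Matrix m n R →ₗ[R] Matrix m n R :=
  mulLeftLinearMap n R A - mulRightLinearMap m R B

@[simp]
theorem sylvesterMap_apply {R : Type*} [CommRing R] (A : Matrix m m R) (B : Matrix n n R)
    (X : Matrix m n R) : sylvesterMap A B X = A * X - X * B :=
  rfl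

variable [DecidableEq m] [DecidableEq n]

theorem aeval_mul_eq_mul_aeval {R : Type*} [CommSemiring R] {A : Matrix m m R}
    {B : Matrix n n R} {X : Matrix m n R} (h : A * X = X * B) (p : R[X]) :
    aeval A p * X = X * aeval B p := by
  induction p using Polynomial.induction_on' with
  | add p q hp hq => rw [map_add, map_add, Matrix.add_mul, Matrix.mul_add, hp, hq]
  | monomial k c =>
    have hpow : A ^ k * X = X * B ^ k := by
      induction k with
      | zero => simp
      | succ k ih =>
        rw [pow_succ, pow_succ, Matrix.mul_assoc, h, ← Matrix.mul_assoc, ih, Matrix.mul_assoc]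
    rw [aeval_monomial, aeval_monomial, ← Algebra.smul_def, ← Algebra.smul_def, Matrix.smul_mul,
      Matrix.mul_smul, hpow]

variable {K : Type*} [Field K]

theorem exists_mulVec_eq_smul_of_mem_spectrum {A : Matrix n n K} {μ : K}
    (h : μ ∈ spectrum K A) : ∃ v ≠ 0, A *ᵥ v = μ • v := by
  rw [← spectrum_toLin', ← Module.End.hasEigenvalue_iff_mem_spectrum] at h
  obtain ⟨v, hv⟩ := h.exists_hasEigenvector
  exact ⟨v, hv.2, by simpa using hv.apply_eq_smul⟩

theorem exists_vecMul_eq_smul_of_mem_spectrum {B : Matrix n n K} {μ : K}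
    (h : μ ∈ spectrum K B) : ∃ w ≠ 0, w ᵥ* B = μ • w := by
  rw [mem_spectrum_iff_isRoot_charpoly, ← charpoly_transpose,
    ← mem_spectrum_iff_isRoot_charpoly] at h
  simpa only [mulVec_transpose] using exists_mulVec_eq_smul_of_mem_spectrum h

theorem exists_ne_zero_mul_eq_mul_of_mem_spectrum {A : Matrix m m K} {B : Matrix n n K} {μ : K}
    (hA : μ ∈ spectrum K A) (hB : μ ∈ spectrum K B) :
    ∃ X : Matrix m n K, X ≠ 0 ∧ A * X = X * B := by
  obtain ⟨v, hv0, hv⟩ := exists_mulVec_eq_smul_of_mem_spectrum hA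
  obtain ⟨w, hw0, hw⟩ := exists_vecMul_eq_smul_of_mem_spectrum hB
  obtain ⟨i, hi⟩ := Function.ne_iff.mp hv0
  obtain ⟨j, hj⟩ := Function.ne_iff.mp hw0
  refine ⟨vecMulVec v w, fun h => mul_ne_zero hi hj congr($h i j), ?_⟩
  rw [mul_vecMulVec, vecMulVec_mul, hv, hw, smul_vecMulVec, vecMulVec_smul]

theorem eq_zero_of_mul_eq_mul_of_disjoint_spectrum [IsAlgClosed K] {A : Matrix m m K}
    {B : Matrix n n K} {X : Matrix m n K} (hAB : Disjoint (spectrum K A) (spectrum K B))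
    (h : A * X = X * B) : X = 0 := by
  have hunit : IsUnit (aeval A B.charpoly) := isUnit_aeval_of_forall_eval_ne_zero fun k hk =>
    mt mem_spectrum_iff_isRoot_charpoly.mpr (Set.disjoint_left.mp hAB hk)
  have hkill : aeval A B.charpoly * X = 0 := by
    rw [aeval_mul_eq_mul_aeval h, aeval_self_charpoly, Matrix.mul_zero]
  rw [← nonsing_inv_mul_cancel_left (A := aeval A B.charpoly) X
    ((isUnit_iff_isUnit_det _).mp hunit), hkill, Matrix.mul_zero]

theorem sylvesterMap_injective_iff [IsAlgClosed K] {A : Matrix m m K} {B : Matrix n n K} :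
    Function.Injective (sylvesterMap A B) ↔ Disjoint (spectrum K A) (spectrum K B) := by
  simp only [injective_iff_map_eq_zero, sylvesterMap_apply, sub_eq_zero]
  refine ⟨fun hinj => Set.disjoint_left.mpr fun μ hA hB => ?_,
    fun hAB X => eq_zero_of_mul_eq_mul_of_disjoint_spectrum hAB⟩
  obtain ⟨X, hX0, hX⟩ := exists_ne_zero_mul_eq_mul_of_mem_spectrum hA hB
  exact hX0 (hinj X hX)

end Matrix

/-- The Sylvester map X ↦ AX − XB on m×n complex matrices is bijective
iff A and B have disjoint spectra. -/
theorem sylvester_bijective_iff_spectra_disjoint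
    (m n : ℕ) (A : Matrix (Fin m) (Fin m) ℂ) (B : Matrix (Fin n) (Fin n) ℂ) :
    Function.Bijective (fun X : Matrix (Fin m) (Fin n) ℂ => A * X - X * B) ↔
      spectrum ℂ A ∩ spectrum ℂ B = ∅ := by
  rw [← Set.disjoint_iff_inter_eq_empty, ← Matrix.sylvesterMap_injective_iff]
  change Function.Bijective (Matrix.sylvesterMap A B) ↔ _
  exact ⟨Function.Bijective.injective, fun h => ⟨h, LinearMap.injective_iff_surjective.mp h⟩⟩
end

section
/- Let q ∈ ℂ with 0 < |q| < 1, and let A(x) = Σ_{n≥0} A_n x^n be a formal power series with m×m matrix coefficients whose constant term is A_0 = Θ ⊕ O_{m−s}, where Θ = diag(θ_1,…,θ_s) with all θ_i ≠ 0 and θ_j/θ_i ∉ q^{ℤ≥1} for all i,j. Then there exists a formal power series P(x) = Σ_{n≥0} P_n x^n with P_0 = I, whose coefficients P_n (n ≥ 1) have vanishing (1,1)-block (size s×s) and vanishing (2,2)-block (size (m−s)×(m−s)), such that B(x) := P(qx)^{-1} A(x) P(x) is block-diagonal with blocks of sizes s and m−s. -/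
/-!
At order `n ≥ 1` the gauge equation `A(x) P(x) = P(qx) B(x)` reads
`C_n + A₀ P_n = qⁿ P_n A₀ + B_n`, where `C_n` only involves `P_k, B_k` for `0 < k < n`.
With `A₀ = Θ ⊕ 0`, its off-diagonal blocks are `C₁₂ + Θ P₁₂ = 0` and `C₂₁ = qⁿ P₂₁ Θ`,
solvable since `Θ` is invertible and `q ≠ 0`; the diagonal blocks of `C_n` go into `B_n`.
-/

open Matrix Finset

section Recursion

variable {K R : Type*} [Semiring K] [Ring R] [Module K R]

/-- `(P_n, B_n) = solve n C_n` with `C_n = A_n + ∑_{0<k<n} (A_{n-k} P_k - q^{n-k} P_{n-k} B_k)`,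
starting from `(P₀, B₀) = (1, A₀)`. -/
def qGaugeCoeffs (q : K) (A : ℕ → R) (solve : ℕ → R → R × R) : ℕ → R × R
  | 0 => (1, A 0)
  | n + 1 => solve (n + 1) (A (n + 1) + ∑ j : Fin n,
      (A (n - j) * (qGaugeCoeffs q A solve (j + 1)).1 -
        q ^ (n - j) • ((qGaugeCoeffs q A solve (n - j)).1 * (qGaugeCoeffs q A solve (j + 1)).2)))
decreasing_by all_goals omega

variable (q : K) (A : ℕ → R) (solve : ℕ → R → R × R)

theorem qGaugeCoeffs_zero : qGaugeCoeffs q A solve 0 = (1, A 0) := by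
  rw [qGaugeCoeffs]

theorem exists_qGaugeCoeffs_succ_eq (n : ℕ) :
    ∃ C, qGaugeCoeffs q A solve (n + 1) = solve (n + 1) C :=
  ⟨_, by rw [qGaugeCoeffs]⟩

theorem qGaugeCoeffs_convolution
    (hsolve : ∀ n C, C + A 0 * (solve n C).1 = q ^ n • ((solve n C).1 * A 0) + (solve n C).2)
    (n : ℕ) :
    ∑ k ∈ range (n + 1), A (n - k) * (qGaugeCoeffs q A solve k).1 =
      ∑ k ∈ range (n + 1),
        q ^ (n - k) • ((qGaugeCoeffs q A solve (n - k)).1 * (qGaugeCoeffs q A solve k).2) := by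
  set F := qGaugeCoeffs q A solve
  cases n with
  | zero => simp [F, qGaugeCoeffs_zero]
  | succ n =>
    set C := A (n + 1) + ∑ j ∈ range n,
      (A (n - j) * (F (j + 1)).1 - q ^ (n - j) • ((F (n - j)).1 * (F (j + 1)).2))
    have hF : F (n + 1) = solve (n + 1) C := by
      simp only [F, C, ← Fin.sum_univ_eq_sum_range]
      rw [qGaugeCoeffs]
    have key := hsolve (n + 1) C
    rw [← hF] at key
    rw [sum_range_succ, sum_range_succ', sum_range_succ, sum_range_succ']
    simp only [C, sum_sub_distrib, Nat.sub_self, Nat.sub_zero, Nat.succ_sub_succ_eq_sub, F,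
      qGaugeCoeffs_zero, mul_one, one_mul, pow_zero, one_smul] at key ⊢
    rw [← sub_eq_zero] at key ⊢
    rw [← key]
    abel

end Recursion

section BlockHomological

variable {K m l : Type*} [Field K] [Fintype m] [DecidableEq m]

noncomputable def blockHomologicalSolution (Θ : Matrix m m K) (c : K)
    (C : Matrix (m ⊕ l) (m ⊕ l) K) : Matrix (m ⊕ l) (m ⊕ l) K × Matrix (m ⊕ l) (m ⊕ l) K :=
  (fromBlocks 0 (-(Θ⁻¹ * C.toBlocks₁₂)) (c⁻¹ • (C.toBlocks₂₁ * Θ⁻¹)) 0,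
    fromBlocks C.toBlocks₁₁ 0 0 C.toBlocks₂₂)

theorem blockHomologicalSolution_spec [Fintype l] [DecidableEq l] {Θ : Matrix m m K}
    (hΘ : IsUnit Θ.det) {c : K} (hc : c ≠ 0) (C : Matrix (m ⊕ l) (m ⊕ l) K) :
    C + fromBlocks Θ 0 0 (0 : Matrix l l K) * (blockHomologicalSolution Θ c C).1 =
      c • ((blockHomologicalSolution Θ c C).1 * fromBlocks Θ 0 0 0) +
        (blockHomologicalSolution Θ c C).2 := by
  conv_lhs => rw [← fromBlocks_toBlocks C]
  simp only [blockHomologicalSolution, fromBlocks_multiply, fromBlocks_add, fromBlocks_smul,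
    fromBlocks_inj]
  refine ⟨by simp, ?_, ?_, by simp⟩
  · simp [← Matrix.mul_assoc, mul_nonsing_inv _ hΘ]
  · simp [Matrix.mul_assoc, nonsing_inv_mul _ hΘ, smul_smul, hc]

end BlockHomological

theorem block_diagonalization_nonFuchsian_general
    (s r : ℕ) (q : ℂ) (hq0 : 0 < ‖q‖)
    (θ : Fin s → ℂ) (hθ : ∀ i, θ i ≠ 0)
    (A : ℕ → Matrix (Fin s ⊕ Fin r) (Fin s ⊕ Fin r) ℂ)
    (hA0 : A 0 = Matrix.fromBlocks (Matrix.diagonal θ) 0 0 0) :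
    ∃ P B : ℕ → Matrix (Fin s ⊕ Fin r) (Fin s ⊕ Fin r) ℂ,
      P 0 = 1 ∧
      (∀ n : ℕ, 1 ≤ n → (P n).toBlocks₁₁ = 0 ∧ (P n).toBlocks₂₂ = 0) ∧
      (∀ n : ℕ, (B n).toBlocks₁₂ = 0 ∧ (B n).toBlocks₂₁ = 0) ∧
      (∀ n : ℕ, ∑ k ∈ Finset.range (n + 1), A (n - k) * P k =
        ∑ k ∈ Finset.range (n + 1), q ^ (n - k) • (P (n - k) * B k)) := by
  have hq : q ≠ 0 := norm_pos_iff.mp hq0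
  have hΘ : IsUnit (diagonal θ).det := by
    rw [det_diagonal, isUnit_iff_ne_zero]
    exact prod_ne_zero_iff.mpr fun i _ => hθ i
  let solve n := blockHomologicalSolution (l := Fin r) (diagonal θ) (q ^ n)
  let F := qGaugeCoeffs q A solve
  refine ⟨fun n => (F n).1, fun n => (F n).2, by simp [F, qGaugeCoeffs_zero], ?_, ?_, ?_⟩
  · intro n hn
    obtain ⟨n, rfl⟩ := Nat.exists_eq_add_of_le' hn
    obtain ⟨C, hC⟩ := exists_qGaugeCoeffs_succ_eq q A solve n
    simp [F, hC, solve, blockHomologicalSolution]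
  · rintro (_ | n)
    · simp [F, qGaugeCoeffs_zero, hA0]
    · obtain ⟨C, hC⟩ := exists_qGaugeCoeffs_succ_eq q A solve n
      simp [F, hC, solve, blockHomologicalSolution]
  · refine qGaugeCoeffs_convolution q A solve fun n C => ?_
    rw [hA0]
    exact blockHomologicalSolution_spec hΘ (pow_ne_zero n hq) C

/-- Block-diagonalization of a non-Fuchsian linear q-difference system at x = 0:
if A₀ = Θ ⊕ O with Θ = diag(θ₁,…,θ_s) invertible and non-resonant, then there is
a formal power series P(x) with P₀ = I whose higher coefficients have vanishing
diagonal blocks, such that B(x) = P(qx)⁻¹ A(x) P(x) is block-diagonal. -/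
theorem block_diagonalization_nonFuchsian
    (s r : ℕ) (q : ℂ) (hq0 : 0 < ‖q‖) (hq1 : ‖q‖ < 1)
    (θ : Fin s → ℂ) (hθ : ∀ i, θ i ≠ 0)
    (hres : ∀ i j : Fin s, ∀ n : ℕ, 1 ≤ n → θ j / θ i ≠ q ^ n)
    (A : ℕ → Matrix (Fin s ⊕ Fin r) (Fin s ⊕ Fin r) ℂ)
    (hA0 : A 0 = Matrix.fromBlocks (Matrix.diagonal θ) 0 0 0) :
    ∃ P B : ℕ → Matrix (Fin s ⊕ Fin r) (Fin s ⊕ Fin r) ℂ,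
      P 0 = 1 ∧
      (∀ n : ℕ, 1 ≤ n → (P n).toBlocks₁₁ = 0 ∧ (P n).toBlocks₂₂ = 0) ∧
      (∀ n : ℕ, (B n).toBlocks₁₂ = 0 ∧ (B n).toBlocks₂₁ = 0) ∧
      (∀ n : ℕ, ∑ k ∈ Finset.range (n + 1), A (n - k) * P k =
        ∑ k ∈ Finset.range (n + 1), q ^ (n - k) • (P (n - k) * B k)) :=
  block_diagonalization_nonFuchsian_general s r q hq0 θ hθ A hA0
end
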